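/- arXiv:math-ph/0412047 — 7 statements merged into one kernel-verified Lean document; each statement's English description precedes it below -/
import Mathlib

section
/- Let λ(t) be a differentiable eigenvalue branch of a differentiable family of unitary matrices L(t) with differentiable unit eigenvector φ(t), i.e. L(t)φ(t) = λ(t)φ(t) and ‖φ(t)‖ = 1 for all t. If dL/dt = [L, P], then dλ/dt = 0. -/
open Matrix

/-!
Differentiating `L φ = λ φ` gives `L' φ + L φ' = λ' φ + λ φ'`. Pair this with the left
eigenvector `φ*`: for a unitary (hence normal) `L`, `φ* L = λ φ*`, so the `φ'` terms cancel
and `φ* [L, P] φ = λ φ* P φ - λ φ* P φ = 0`, leaving `λ' ‖φ‖² = 0`.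
-/

namespace Matrix

variable {n : Type*} [Fintype n]

theorem dotProduct_commutator_mulVec_eq_zero {R : Type*} [CommRing R]
    {A B : Matrix n n R} {u v : n → R} {l : R}
    (hu : u ᵥ* A = l • u) (hv : A *ᵥ v = l • v) :
    u ⬝ᵥ ((A * B - B * A) *ᵥ v) = 0 := by
  rw [sub_mulVec, dotProduct_sub, ← mulVec_mulVec, ← mulVec_mulVec, dotProduct_mulVec, hu, hv,
    smul_dotProduct, mulVec_smul, dotProduct_smul, sub_self]

/-- Hellmann–Feynman: pairing the differentiated eigenvalue equation with a left eigenvector `u`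
eliminates the derivative `w` of the eigenvector. -/
theorem dotProduct_mulVec_eq_of_eigen_deriv {R : Type*} [CommRing R]
    {A A' : Matrix n n R} {u v w : n → R} {l l' : R}
    (hu : u ᵥ* A = l • u) (hderiv : A' *ᵥ v + A *ᵥ w = l' • v + l • w) :
    u ⬝ᵥ (A' *ᵥ v) = l' * (u ⬝ᵥ v) := by
  have h := congrArg (u ⬝ᵥ ·) hderiv
  simp only [dotProduct_add, dotProduct_mulVec u A, hu, smul_dotProduct, dotProduct_smul,
    smul_eq_mul] at h
  exact add_right_cancel h

theorem vecMul_star_eq_of_mem_unitaryGroup {K : Type*} [Field K] [StarRing K] [DecidableEq n]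
    {A : Matrix n n K} (hA : A ∈ unitaryGroup n K) {v : n → K} {l : K}
    (hv : A *ᵥ v = l • v) (hv0 : star v ⬝ᵥ v ≠ 0) :
    star v ᵥ* A = l • star v := by
  have hAv : Aᴴ *ᵥ (A *ᵥ v) = v := by
    rw [mulVec_mulVec, ← star_eq_conjTranspose, mem_unitaryGroup_iff'.mp hA, one_mulVec]
  -- `A` preserves `star v ⬝ᵥ v`, so `|l|² = 1`.
  have hl : star l * l = 1 := by
    have h : star (A *ᵥ v) ⬝ᵥ (A *ᵥ v) = star v ⬝ᵥ v := by
      rw [star_mulVec, ← dotProduct_mulVec, hAv]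
    rw [hv, star_smul, smul_dotProduct, dotProduct_smul, smul_eq_mul, smul_eq_mul,
      ← mul_assoc] at h
    exact mul_right_cancel₀ hv0 (h.trans (one_mul _).symm)
  have hAHv : Aᴴ *ᵥ v = star l • v := by
    rw [← one_smul K (Aᴴ *ᵥ v), ← hl, mul_smul, ← mulVec_smul, ← hv, hAv]
  rw [← conjTranspose_conjTranspose A, ← star_mulVec, hAHv, star_smul, star_star]

end Matrix

theorem Complex.star_dotProduct_self {n : Type*} [Fintype n] (v : n → ℂ) :
    star v ⬝ᵥ v = ((∑ i, Complex.normSq (v i) : ℝ) : ℂ) := by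
  simp [dotProduct, Complex.normSq_eq_conj_mul_self]

theorem hasDerivAt_matrix_mulVec_apply {𝕜 𝔸 m n : Type*} [Fintype n] [NontriviallyNormedField 𝕜]
    [NormedCommRing 𝔸] [NormedAlgebra 𝕜 𝔸] {A : 𝕜 → Matrix m n 𝔸} {A' : Matrix m n 𝔸}
    {v : 𝕜 → n → 𝔸} {v' : n → 𝔸} {x : 𝕜}
    (hA : ∀ i j, HasDerivAt (fun s => A s i j) (A' i j) x)
    (hv : ∀ j, HasDerivAt (fun s => v s j) (v' j) x) (i : m) :
    HasDerivAt (fun s => (A s *ᵥ v s) i) ((A' *ᵥ v x + A x *ᵥ v') i) x := by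
  simpa [mulVec, dotProduct, Finset.sum_add_distrib] using
    HasDerivAt.fun_sum fun j (_ : j ∈ Finset.univ) => (hA i j).mul (hv j)

/-- Let `L t` be a differentiable family of unitary `N × N`
matrices satisfying the Lax equation `dL/dt = [L, P]`, and let `lam t` be a
differentiable eigenvalue branch with differentiable unit eigenvector `φ t`,
i.e. `L t ⬝ᵥ φ t = lam t • φ t` and `‖φ t‖ = 1` (as a vector in `ℂ^N`).
Then `dλ/dt = 0`. -/
theorem lax_pair_eigenvalue_branch_constant
    (N : ℕ) (L P : ℝ → Matrix (Fin N) (Fin N) ℂ)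
    (lam : ℝ → ℂ) (lam' : ℝ → ℂ)
    (φ : ℝ → (Fin N → ℂ)) (φ' : ℝ → (Fin N → ℂ))
    (hunit : ∀ t, L t ∈ Matrix.unitaryGroup (Fin N) ℂ)
    (hlax : ∀ t i j, HasDerivAt (fun s => L s i j)
      ((L t * P t - P t * L t) i j) t)
    (heig : ∀ t, (L t).mulVec (φ t) = lam t • φ t)
    (hnorm : ∀ t, ∑ i, Complex.normSq (φ t i) = 1)
    (hφ : ∀ t i, HasDerivAt (fun s => φ s i) (φ' t i) t)
    (hlam : ∀ t, HasDerivAt lam (lam' t) t) :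
    ∀ t, lam' t = 0 := by
  intro t
  have hφ_norm : star (φ t) ⬝ᵥ φ t = 1 := by
    rw [Complex.star_dotProduct_self, hnorm t, Complex.ofReal_one]
  have hleft := vecMul_star_eq_of_mem_unitaryGroup (hunit t) (heig t) (hφ_norm ▸ one_ne_zero)
  have hderiv : (L t * P t - P t * L t) *ᵥ φ t + L t *ᵥ φ' t = lam' t • φ t + lam t • φ' t := by
    funext i
    have hrhs : HasDerivAt (fun s => (L s *ᵥ φ s) i) (lam' t * φ t i + lam t * φ' t i) t := by
      simpa only [heig, Pi.smul_apply, smul_eq_mul] using (hlam t).fun_mul (hφ t i)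
    exact (hasDerivAt_matrix_mulVec_apply (hlax t) (hφ t) i).unique hrhs
  have h := dotProduct_mulVec_eq_of_eigen_deriv hleft hderiv
  rwa [dotProduct_commutator_mulVec_eq_zero hleft (heig t), hφ_norm, mul_one, eq_comm] at h
end

section
/- Let A be an N×N complex matrix that is 'stair-shaped': there is a nondecreasing function i ↦ j(i) such that A_{ij} = 0 whenever j > j(i). Let B be any N×N matrix and let B₊ denote the upper triangular truncation of B (entries of B strictly above the diagonal, half the diagonal entries, and zero below). Then for every pair (i,j) with j > j(i), one has [A, B₊]_{ij} = [A, B]_{ij}. -/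
/-- The upper triangular truncation `B₊` of a matrix: entries strictly above
the diagonal, half the diagonal, zero below. -/
noncomputable def upperTrunc {N : ℕ} (B : Matrix (Fin N) (Fin N) ℂ) : Matrix (Fin N) (Fin N) ℂ :=
  Matrix.of fun i j => if i < j then B i j else if i = j then B i i / 2 else 0

/-- If `A` is stair-shaped, i.e. there is a nondecreasing
function `i ↦ J i` with `A i j = 0` whenever `(j : ℕ) > J i`, then for every
pair `(i,j)` with `(j : ℕ) > J i` one has `[A, B₊]_{ij} = [A, B]_{ij}`. -/
theorem stair_shape_commutator_upper_trunc
    (N : ℕ) (A B : Matrix (Fin N) (Fin N) ℂ) (J : Fin N → ℕ)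
    (hJ : Monotone J)
    (hA : ∀ i j : Fin N, (j : ℕ) > J i → A i j = 0) :
    ∀ i j : Fin N, (j : ℕ) > J i →
      (A * upperTrunc B - upperTrunc B * A) i j = (A * B - B * A) i j := by
  intro i j hij
  simp only [Matrix.sub_apply, Matrix.mul_apply]
  congr 1
  · refine Finset.sum_congr rfl fun k _ => ?_
    by_cases h : k < j
    · simp [upperTrunc, h]
    · have hk : (j : ℕ) ≤ (k : ℕ) := by
        exact_mod_cast (not_lt.mp h)
      have : A i k = 0 := hA i k (lt_of_lt_of_le hij hk)
      simp [this]
  · refine Finset.sum_congr rfl fun k _ => ?_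
    by_cases h : i < k
    · simp [upperTrunc, h]
    · have hk : (k : ℕ) ≤ (i : ℕ) := by
        exact_mod_cast (not_lt.mp h)
      have hk' : k ≤ i := not_lt.mp h
      have : A k j = 0 := hA k j (lt_of_le_of_lt (hJ hk') hij)
      simp [this]
end

section
/- Let A be an N×N stair-shaped matrix (A_{ij} = 0 for j > j(i) with i ↦ j(i) nondecreasing) and B any N×N matrix, with B₋ = B - B₊ the lower triangular truncation. Then [A, B₋]_{ij} = [A, B]_{ij} - [A, B₊]_{ij} for all i,j; in particular if A and B commute, then [A, B₋]_{ij} = 0 whenever j > j(i), i.e. [A, B₋] has the same stair shape as A. -/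
/-- The lower triangular truncation `B₋ = B - B₊`. -/
noncomputable def lowerTrunc {N : ℕ} (B : Matrix (Fin N) (Fin N) ℂ) : Matrix (Fin N) (Fin N) ℂ :=
  B - upperTrunc B

/-- For `A` stair-shaped (`A i j = 0` for `(j:ℕ) > J i`, `J`
nondecreasing) and any `B`, one has
`[A, B₋]_{ij} = [A, B]_{ij} - [A, B₊]_{ij}` for all `i, j`; in particular, if
`A` and `B` commute then `[A, B₋]_{ij} = 0` whenever `(j:ℕ) > J i`, i.e.
`[A, B₋]` has the same stair shape as `A`. -/
theorem stair_shape_commutator_lower_trunc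
    (N : ℕ) (A B : Matrix (Fin N) (Fin N) ℂ) (J : Fin N → ℕ)
    (hJ : Monotone J)
    (hA : ∀ i j : Fin N, (j : ℕ) > J i → A i j = 0) :
    (∀ i j : Fin N,
      (A * lowerTrunc B - lowerTrunc B * A) i j
        = (A * B - B * A) i j - (A * upperTrunc B - upperTrunc B * A) i j) ∧
    (A * B = B * A →
      ∀ i j : Fin N, (j : ℕ) > J i →
        (A * lowerTrunc B - lowerTrunc B * A) i j = 0) := by
  have key : ∀ i j : Fin N,
      (A * lowerTrunc B - lowerTrunc B * A) i j
        = (A * B - B * A) i j - (A * upperTrunc B - upperTrunc B * A) i j := by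
    intro i j
    simp only [lowerTrunc, Matrix.mul_sub, Matrix.sub_mul, Matrix.sub_apply]
    ring
  refine ⟨key, ?_⟩
  intro hcomm i j hj
  have h1 : (A * upperTrunc B) i j = (A * B) i j := by
    simp only [Matrix.mul_apply]
    refine Finset.sum_congr rfl fun k _ => ?_
    by_cases hk : A i k = 0
    · simp [hk]
    · have hkJ : (k : ℕ) ≤ J i := by
        by_contra h
        exact hk (hA i k (lt_of_not_ge h))
      have hkj : k < j := by
        have : (k : ℕ) < (j : ℕ) := lt_of_le_of_lt hkJ hj
        exact Fin.lt_def.mpr this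
      simp [upperTrunc, hkj]
  have h2 : (upperTrunc B * A) i j = (B * A) i j := by
    simp only [Matrix.mul_apply]
    refine Finset.sum_congr rfl fun k _ => ?_
    by_cases hk : A k j = 0
    · simp [hk]
    · have hjJ : (j : ℕ) ≤ J k := by
        by_contra h
        exact hk (hA k j (lt_of_not_ge h))
      have hik : i < k := by
        by_contra h
        have : J k ≤ J i := hJ (le_of_not_gt h)
        omega
      simp [upperTrunc, hik]
  rw [key i j, Matrix.sub_apply, Matrix.sub_apply, h1, h2, hcomm]
  ring
end

section
/- Let A and B be N×N matrices that commute, with A stair-shaped. Then both [A, B₊] and [A, B₋] are stair-shaped with the same shape as A, i.e. [A,B₊]_{ij} = [A,B₋]_{ij} = 0 whenever j > j(i). -/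
/-- If `A` and `B` are commuting `N × N` matrices and `A` is
stair-shaped (`A i j = 0` for `(j:ℕ) > J i`, `J` nondecreasing), then both
`[A, B₊]` and `[A, B₋]` are stair-shaped with the same shape as `A`:
their `(i,j)` entries vanish whenever `(j:ℕ) > J i`. -/
theorem stair_shape_commutators_same_shape
    (N : ℕ) (A B : Matrix (Fin N) (Fin N) ℂ) (J : Fin N → ℕ)
    (hJ : Monotone J)
    (hA : ∀ i j : Fin N, (j : ℕ) > J i → A i j = 0)
    (hcomm : A * B = B * A) :
    ∀ i j : Fin N, (j : ℕ) > J i →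
      (A * upperTrunc B - upperTrunc B * A) i j = 0 ∧
      (A * lowerTrunc B - lowerTrunc B * A) i j = 0 := by
  intro i j hij
  have h1 : (A * upperTrunc B) i j = (A * B) i j := by
    simp only [Matrix.mul_apply]
    apply Finset.sum_congr rfl
    intro k _
    by_cases hk : (k : ℕ) ≤ J i
    · have hkj : k < j := by rw [Fin.lt_def]; omega
      simp [upperTrunc, hkj]
    · rw [hA i k (by omega)]; ring
  have h2 : (upperTrunc B * A) i j = (B * A) i j := by
    simp only [Matrix.mul_apply]
    apply Finset.sum_congr rfl
    intro k _
    by_cases hk : A k j = 0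
    · rw [hk]; ring
    · have hjk : (j : ℕ) ≤ J k := by
        by_contra h
        exact hk (hA k j (by omega))
      have hik : i < k := by
        by_contra h
        push_neg at h
        have := hJ h
        omega
      simp [upperTrunc, hik]
  have hu : (A * upperTrunc B - upperTrunc B * A) i j = 0 := by
    simp only [Matrix.sub_apply, h1, h2, hcomm, sub_self]
  refine ⟨hu, ?_⟩
  have : A * lowerTrunc B - lowerTrunc B * A =
      (A * B - B * A) - (A * upperTrunc B - upperTrunc B * A) := by
    simp only [lowerTrunc]
    noncomm_ring
  rw [this]
  simp only [Matrix.sub_apply, hcomm, sub_self, hu]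
  simp
end

section
/- Let E be the extended CMV matrix of a doubly-infinite sequence of Verblunsky coefficients. For n ≥ 1 and j even, the extreme nonzero entries of E^n are products of ρ's: (E^n)_{j, j+2n} = ρ_j ρ_{j+1} ⋯ ρ_{j+2n-1} and (E^n)_{j+1, j-(2n-1)} = ρ_{j-(2n-1)} ρ_{j-(2n-2)} ⋯ ρ_j. -/
open scoped ComplexConjugate

/-- `ρ_j = √(1 - |α_j|²)`. -/
noncomputable def alRho (α : ℤ → ℂ) (j : ℤ) : ℝ := Real.sqrt (1 - ‖α j‖ ^ 2)

/-- `L̃ = ⊕_{j even} Θ_j`, where `Θ_j = [[conj α_j, ρ_j],[ρ_j, -α_j]]` acts on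
coordinates `j, j+1`. -/
noncomputable def cmvL (α : ℤ → ℂ) (j k : ℤ) : ℂ :=
  if Even j then
    (if k = j then conj (α j) else if k = j + 1 then (alRho α j : ℂ) else 0)
  else
    (if k = j - 1 then (alRho α (j - 1) : ℂ) else if k = j then -α (j - 1) else 0)

/-- `M̃ = ⊕_{j odd} Θ_j`. -/
noncomputable def cmvM (α : ℤ → ℂ) (j k : ℤ) : ℂ :=
  if Odd j then
    (if k = j then conj (α j) else if k = j + 1 then (alRho α j : ℂ) else 0)
  else
    (if k = j - 1 then (alRho α (j - 1) : ℂ) else if k = j then -α (j - 1) else 0)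

/-- The extended CMV matrix `E = L̃ M̃`; the row of `L̃` at `j` is supported in
`{j-1, j, j+1}`, so the matrix product is the displayed finite sum. -/
noncomputable def cmvE (α : ℤ → ℂ) (j k : ℤ) : ℂ :=
  ∑ l ∈ Finset.Icc (j - 1) (j + 1), cmvL α j l * cmvM α l k

/-- Entries of powers `E^n`; the row of `E` at `j` is supported in
`[j-2, j+2]`, so the matrix product is the displayed finite sum. -/
noncomputable def cmvEpow (α : ℤ → ℂ) : ℕ → ℤ → ℤ → ℂ
  | 0, j, k => if j = k then 1 else 0
  | n + 1, j, k => ∑ l ∈ Finset.Icc (j - 2) (j + 2), cmvE α j l * cmvEpow α n l k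

/-! `E` is pentadiagonal, so `E^n` vanishes more than `2n` off the diagonal, and an entry of `E^n`
exactly `2n` off the diagonal is the product of the `n` entries of `E` two steps off the diagonal
along the unique path to it. Each such entry of `E = L̃ M̃` has a single nonzero term, the product of
the two `ρ`'s of the adjacent blocks `Θ`. -/

open Finset

theorem Finset.prod_range_two_mul {M : Type*} [CommMonoid M] (f : ℕ → M) (n : ℕ) :
    ∏ i ∈ range (2 * n), f i = ∏ i ∈ range n, f (2 * i) * f (2 * i + 1) := by
  induction n with
  | zero => simp
  | succ n ih => rw [Nat.mul_succ, prod_range_succ, prod_range_succ, prod_range_succ, ih, mul_assoc]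

lemma cmvM_eq_zero_of_one_lt_abs (α : ℤ → ℂ) {l k : ℤ} (h : 1 < |k - l|) :
    cmvM α l k = 0 := by
  rcases lt_abs.mp h with h | h <;> (unfold cmvM; split_ifs <;> first | rfl | omega)

lemma cmvE_self_add_two (α : ℤ → ℂ) {j : ℤ} (hj : Even j) :
    cmvE α j (j + 2) = alRho α j * alRho α (j + 1) := by
  rw [cmvE, sum_eq_single_of_mem (j + 1) (mem_Icc.mpr ⟨by omega, le_rfl⟩)]
  · rw [cmvL, if_pos hj, if_neg (by omega), if_pos rfl, cmvM, if_pos hj.add_one,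
      if_neg (by omega), if_pos (by ring)]
  · intro l hl hne
    rw [mem_Icc] at hl
    rw [cmvM_eq_zero_of_one_lt_abs α (lt_abs.mpr (by omega)), mul_zero]

lemma cmvE_add_two_self (α : ℤ → ℂ) {j : ℤ} (hj : Odd j) :
    cmvE α (j + 2) j = alRho α j * alRho α (j + 1) := by
  rw [cmvE, sum_eq_single_of_mem (j + 1) (mem_Icc.mpr ⟨by omega, by omega⟩)]
  · have hrow : ¬Even (j + 2) := Int.not_even_iff_odd.mpr (hj.add_even even_two)
    have hcol : ¬Odd (j + 1) := Int.not_odd_iff_even.mpr hj.add_one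
    rw [cmvL, if_neg hrow, if_pos (by ring), cmvM, if_neg hcol, if_pos (by ring),
      show j + 2 - 1 = j + 1 by ring, add_sub_cancel_right, mul_comm]
  · intro l hl hne
    rw [mem_Icc] at hl
    rw [cmvM_eq_zero_of_one_lt_abs α (lt_abs.mpr (by omega)), mul_zero]

lemma cmvEpow_eq_zero_of_two_mul_lt_abs (α : ℤ → ℂ) (n : ℕ) {j k : ℤ}
    (h : 2 * n < |k - j|) : cmvEpow α n j k = 0 := by
  induction n generalizing j with
  | zero => exact if_neg fun hjk => by simp [hjk] at h
  | succ n ih =>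
    refine sum_eq_zero fun l hl => ?_
    rw [mem_Icc] at hl
    rcases lt_abs.mp h with h | h <;>
      rw [ih (lt_abs.mpr (by push_cast at h; omega)), mul_zero]

lemma cmvEpow_apply_add_two_mul (α : ℤ → ℂ) (n : ℕ) (j : ℤ) :
    cmvEpow α n j (j + 2 * n) = ∏ i ∈ range n, cmvE α (j + 2 * i) (j + 2 * i + 2) := by
  induction n generalizing j with
  | zero => simp [cmvEpow]
  | succ n ih =>
    rw [show j + 2 * ((n + 1 : ℕ) : ℤ) = j + 2 + 2 * n by push_cast; ring, cmvEpow,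
      sum_eq_single_of_mem (j + 2) (mem_Icc.mpr ⟨by omega, le_rfl⟩), prod_range_succ', ih,
      mul_comm]
    · push_cast
      ring_nf
    · intro l hl hne
      rw [mem_Icc] at hl
      rw [cmvEpow_eq_zero_of_two_mul_lt_abs α n (lt_abs.mpr (by omega)), mul_zero]

lemma cmvEpow_add_two_mul_apply (α : ℤ → ℂ) (n : ℕ) (j : ℤ) :
    cmvEpow α n (j + 2 * n) j = ∏ i ∈ range n, cmvE α (j + 2 * i + 2) (j + 2 * i) := by
  induction n generalizing j with
  | zero => simp [cmvEpow]
  | succ n ih =>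
    rw [show j + 2 * ((n + 1 : ℕ) : ℤ) = j + 2 * n + 2 by push_cast; ring, cmvEpow,
      sum_eq_single_of_mem (j + 2 * n) (mem_Icc.mpr ⟨by omega, by omega⟩), prod_range_succ, ih,
      mul_comm]
    · intro l hl hne
      rw [mem_Icc] at hl
      rw [cmvEpow_eq_zero_of_two_mul_lt_abs α n (lt_abs.mpr (by omega)), mul_zero]

lemma cmvEpow_apply_add_two_mul_of_even (α : ℤ → ℂ) (n : ℕ) {j : ℤ} (hj : Even j) :
    cmvEpow α n j (j + 2 * n) = ∏ i ∈ range (2 * n), (alRho α (j + i) : ℂ) := by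
  rw [cmvEpow_apply_add_two_mul, prod_range_two_mul]
  refine prod_congr rfl fun i _ => ?_
  rw [cmvE_self_add_two α (hj.add (even_two_mul _))]
  push_cast
  ring_nf

lemma cmvEpow_add_two_mul_apply_of_odd (α : ℤ → ℂ) (n : ℕ) {j : ℤ} (hj : Odd j) :
    cmvEpow α n (j + 2 * n) j = ∏ i ∈ range (2 * n), (alRho α (j + i) : ℂ) := by
  rw [cmvEpow_add_two_mul_apply, prod_range_two_mul]
  refine prod_congr rfl fun i _ => ?_
  rw [cmvE_add_two_self α (hj.add_even (even_two_mul _))]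
  push_cast
  ring_nf

theorem cmvEpow_extreme_entries_general (α : ℤ → ℂ) (n : ℕ) (j : ℤ) (hj : Even j) :
    cmvEpow α n j (j + 2 * n) = ∏ i ∈ Finset.range (2 * n), (alRho α (j + i) : ℂ) ∧
    cmvEpow α n (j + 1) (j - (2 * n - 1)) =
      ∏ i ∈ Finset.range (2 * n), (alRho α (j - (2 * n - 1) + i) : ℂ) := by
  refine ⟨cmvEpow_apply_add_two_mul_of_even α n hj, ?_⟩
  have hodd : Odd (j - (2 * n - 1)) := hj.sub_odd ⟨n - 1, by ring⟩
  rw [← cmvEpow_add_two_mul_apply_of_odd α n hodd]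
  congr 1
  ring

/-- For the extended CMV matrix `E`, `n ≥ 1` and `j` even,
the extreme nonzero entries of `E^n` are products of `ρ`'s:
`(E^n)_{j, j+2n} = ρ_j ρ_{j+1} ⋯ ρ_{j+2n-1}` and
`(E^n)_{j+1, j-(2n-1)} = ρ_{j-(2n-1)} ρ_{j-(2n-2)} ⋯ ρ_j`. -/
theorem cmvEpow_extreme_entries (α : ℤ → ℂ) (hα : ∀ j, ‖α j‖ < 1)
    (n : ℕ) (hn : 1 ≤ n) (j : ℤ) (hj : Even j) :
    cmvEpow α n j (j + 2 * n) = ∏ i ∈ Finset.range (2 * n), (alRho α (j + i) : ℂ) ∧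
    cmvEpow α n (j + 1) (j - (2 * n - 1)) =
      ∏ i ∈ Finset.range (2 * n), (alRho α (j - (2 * n - 1) + i) : ℂ) :=
  cmvEpow_extreme_entries_general α n j hj
end

section
/- Let U be the doubly-infinite shift matrix U_{jk} = δ_{j,k+1}, and let E(α) denote the extended CMV matrix of the sequence (α_j)_{j∈ℤ}. Then U* E(α)^t U = E(α'), where α'_j = α_{j-1}; i.e., the conjugated transpose of a CMV matrix by the shift is again a CMV matrix with shifted coefficients. Similarly, U E(α)^t U* = E(α'') with α''_j = α_{j+1}. -/
/-!
Shifting the coefficients by one flips the parity of every block, so the blocks of `L̃(α')`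
are those of `M̃(α)` transposed and moved down-right by one, and vice versa:
`L̃(α') = U* M̃(α)ᵗ U` and `M̃(α') = U* L̃(α)ᵗ U`. Hence
`E(α') = U* M̃(α)ᵗ L̃(α)ᵗ U = U* E(α)ᵗ U`. The second identity is the first one applied to `α''`.
-/

open scoped ComplexConjugate

lemma cmvL_shift (α : ℤ → ℂ) (j k : ℤ) :
    cmvL (fun m => α (m - 1)) j k = cmvM α (k - 1) (j - 1) := by
  unfold cmvL cmvM alRho
  split_ifs <;> grind

lemma cmvM_shift (α : ℤ → ℂ) (j k : ℤ) :
    cmvM (fun m => α (m - 1)) j k = cmvL α (k - 1) (j - 1) := by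
  unfold cmvL cmvM alRho
  split_ifs <;> grind

lemma cmvL_eq_zero_of_notMem_Icc (α : ℤ → ℂ) {j k : ℤ} (h : k ∉ Finset.Icc (j - 1) (j + 1)) :
    cmvL α j k = 0 := by
  rw [Finset.mem_Icc] at h
  unfold cmvL
  split_ifs <;> first | rfl | omega

lemma cmvM_eq_zero_of_notMem_Icc (α : ℤ → ℂ) {j k : ℤ} (h : j ∉ Finset.Icc (k - 1) (k + 1)) :
    cmvM α j k = 0 := by
  rw [Finset.mem_Icc] at h
  unfold cmvM
  split_ifs <;> first | rfl | omega

lemma cmvE_eq_sum_Icc_column (α : ℤ → ℂ) (j k : ℤ) :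
    cmvE α j k = ∑ l ∈ Finset.Icc (k - 1) (k + 1), cmvL α j l * cmvM α l k :=
  Finset.sum_congr_of_eq_on_inter
    (fun _ _ hl => by rw [cmvM_eq_zero_of_notMem_Icc α hl, mul_zero])
    (fun _ _ hl => by rw [cmvL_eq_zero_of_notMem_Icc α hl, zero_mul])
    (fun _ _ _ => rfl)

lemma sum_Icc_comp_sub_one {M : Type*} [AddCommMonoid M] (f : ℤ → M) (a b : ℤ) :
    ∑ l ∈ Finset.Icc a b, f (l - 1) = ∑ l ∈ Finset.Icc (a - 1) (b - 1), f l := by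
  refine Finset.sum_nbij' (· - 1) (· + 1) ?_ ?_ ?_ ?_ ?_ <;> simp

lemma cmvE_shift (α : ℤ → ℂ) (j k : ℤ) :
    cmvE (fun m => α (m - 1)) j k = cmvE α (k - 1) (j - 1) := by
  calc cmvE (fun m => α (m - 1)) j k
      = ∑ l ∈ Finset.Icc (j - 1) (j + 1), cmvL α (k - 1) (l - 1) * cmvM α (l - 1) (j - 1) := by
        simp only [cmvE, cmvL_shift, cmvM_shift, mul_comm]
    _ = ∑ l ∈ Finset.Icc (j - 1 - 1) (j - 1 + 1), cmvL α (k - 1) l * cmvM α l (j - 1) := by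
        rw [sum_Icc_comp_sub_one (fun l => cmvL α (k - 1) l * cmvM α l (j - 1))]
        congr 2; ring
    _ = cmvE α (k - 1) (j - 1) := (cmvE_eq_sum_Icc_column α _ _).symm

theorem cmvE_shift_transpose_general (α : ℤ → ℂ) :
    (∀ j k : ℤ, cmvE (fun m => α (m - 1)) j k = cmvE α (k - 1) (j - 1)) ∧
    (∀ j k : ℤ, cmvE (fun m => α (m + 1)) j k = cmvE α (k + 1) (j + 1)) := by
  refine ⟨cmvE_shift α, fun j k => ?_⟩
  simpa using (cmvE_shift (fun m => α (m + 1)) (k + 1) (j + 1)).symm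

/-- Let `U` be the doubly-infinite shift matrix
`U_{jk} = δ_{j,k+1}`. Conjugating the transpose of the extended CMV matrix by
`U` gives the extended CMV matrix of shifted coefficients:
`(U* E(α)^t U)_{jk} = E(α)^t_{j-1,k-1} = E(α)_{k-1,j-1}` equals
`E(α')_{jk}` with `α'_j = α_{j-1}`, and similarly
`(U E(α)^t U*)_{jk} = E(α)_{k+1,j+1}` equals `E(α'')_{jk}` with
`α''_j = α_{j+1}`. -/
theorem cmvE_shift_transpose (α : ℤ → ℂ) (hα : ∀ j, ‖α j‖ < 1) :
    (∀ j k : ℤ, cmvE (fun m => α (m - 1)) j k = cmvE α (k - 1) (j - 1)) ∧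
    (∀ j k : ℤ, cmvE (fun m => α (m + 1)) j k = cmvE α (k + 1) (j + 1)) :=
  cmvE_shift_transpose_general α
end

section
/- Let (α_j)_{j≥0} be a sequence in the open unit disk with Σ_j |α_j| < ∞, and C the associated half-infinite CMV matrix. Then for every n ≥ 1 the series Σ_{k≥0} (C^n)_{kk} converges absolutely. Moreover, each diagonal entry (C^n)_{kk} depends only on the coefficients α_{k-(2n-1)}, …, α_{k+2n-1} (with α's of negative index treated as 0), and satisfies the bound |(C^n)_{kk}| ≤ 4^n (|α_{k-(2n-1)}| + ⋯ + |α_{k+2n-1}|) for all k ≥ 4n. -/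
open scoped ComplexConjugate

/-- `ρ_j = √(1 - |α_j|²)` for a half-infinite sequence of coefficients. -/
noncomputable def halfRho (α : ℕ → ℂ) (j : ℕ) : ℝ := Real.sqrt (1 - ‖α j‖ ^ 2)

/-- The factor `L = diag(Θ_0, Θ_2, …)` of the half-infinite CMV matrix, where
`Θ_j = [[conj α_j, ρ_j],[ρ_j, -α_j]]` acts on coordinates `j, j+1`. -/
noncomputable def halfCmvL (α : ℕ → ℂ) (j k : ℕ) : ℂ :=
  if Even j then
    (if k = j then conj (α j) else if k = j + 1 then (halfRho α j : ℂ) else 0)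
  else
    (if k + 1 = j then (halfRho α (j - 1) : ℂ) else if k = j then -α (j - 1) else 0)

/-- The factor `M = diag([1], Θ_1, Θ_3, …)` of the half-infinite CMV matrix. -/
noncomputable def halfCmvM (α : ℕ → ℂ) (j k : ℕ) : ℂ :=
  if j = 0 then (if k = 0 then 1 else 0)
  else if Odd j then
    (if k = j then conj (α j) else if k = j + 1 then (halfRho α j : ℂ) else 0)
  else
    (if k + 1 = j then (halfRho α (j - 1) : ℂ) else if k = j then -α (j - 1) else 0)

/-- The half-infinite CMV matrix `C = L M`; each row of `L` is supported in
`[j-1, j+1]`, so the matrix product is the displayed finite sum. -/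
noncomputable def halfCmvC (α : ℕ → ℂ) (j k : ℕ) : ℂ :=
  ∑ l ∈ Finset.Icc (j - 1) (j + 1), halfCmvL α j l * halfCmvM α l k

/-- Entries of powers `C^n`; each row of `C` is supported in `[j-2, j+2]`, so
the matrix product is the displayed finite sum. -/
noncomputable def halfCmvCpow (α : ℕ → ℂ) : ℕ → ℕ → ℕ → ℂ
  | 0, j, k => if j = k then 1 else 0
  | n + 1, j, k => ∑ l ∈ Finset.Icc (j - 2) (j + 2), halfCmvC α j l * halfCmvCpow α n l k


/-!
For `α ≡ 0` the CMV matrix `C₀` is the permutation matrix of `cmvShift` (`j ↦ j + 2` on even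
`j`, `j ↦ j - 2` on odd `j`), whose single orbit `⋯ → 3 → 1 → 0 → 2 → 4 → ⋯` is a copy of `ℤ`;
hence every power `C₀ⁿ` with `n ≥ 1` has zero diagonal. Rows of `C` have `ℓ¹`-norm at most `4`,
and row `j` of `C - C₀` has `ℓ¹`-norm at most `2 ∑_{j-2 ≤ i ≤ j+1} |α_i|`, so
`Cⁿ⁺¹ - C₀ⁿ⁺¹ = (C - C₀) Cⁿ + C₀ (Cⁿ - C₀ⁿ)` gives `|(Cⁿ - C₀ⁿ)_{jk}| ≤ 4ⁿ ∑ᵢ |α_i|`.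
Since `(Cⁿ)_{kk}` only depends on the `α_i` with `|i - k| ≤ 2n - 1`, applying this to `α` cut
down to that window gives the local bound, and window sums of a summable sequence are summable.
-/

open Finset

lemma sum_le_sum_of_ne_zero_of_nonneg {ι M : Type*} [AddCommMonoid M] [Preorder M]
    [AddLeftMono M] {f : ι → M} {s t : Finset ι} (ht : ∀ i ∈ t, 0 ≤ f i)
    (h : ∀ i ∈ s, f i ≠ 0 → i ∈ t) : ∑ i ∈ s, f i ≤ ∑ i ∈ t, f i := by
  classical
  rw [← sum_filter_of_ne h]
  exact sum_le_sum_of_subset_of_nonneg (fun i hi => (mem_filter.1 hi).2) fun i hi _ => ht i hi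

lemma sum_le_add_of_eq_zero_off_pair {ι : Type*} {s : Finset ι} {f : ι → ℝ} (hf : ∀ i, 0 ≤ f i)
    {a b : ι} (hab : a ≠ b) (h : ∀ i, i ≠ a → i ≠ b → f i = 0) : ∑ i ∈ s, f i ≤ f a + f b := by
  classical
  rw [← sum_pair hab]
  exact sum_le_sum_of_ne_zero_of_nonneg (fun i _ => hf i) fun i _ hi => by
    by_contra hmem
    simp only [mem_insert, mem_singleton, not_or] at hmem
    exact hi (h i hmem.1 hmem.2)

lemma sum_norm_sum_mul_le {ι κ R : Type*} [SeminormedRing R] (s : Finset ι) (t : Finset κ)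
    (a : ι → R) (b : ι → κ → R) :
    ∑ l ∈ t, ‖∑ m ∈ s, a m * b m l‖ ≤ ∑ m ∈ s, ‖a m‖ * ∑ l ∈ t, ‖b m l‖ :=
  calc ∑ l ∈ t, ‖∑ m ∈ s, a m * b m l‖ ≤ ∑ l ∈ t, ∑ m ∈ s, ‖a m‖ * ‖b m l‖ :=
        sum_le_sum fun l _ => (norm_sum_le _ _).trans (sum_le_sum fun m _ => norm_mul_le _ _)
    _ = ∑ m ∈ s, ‖a m‖ * ∑ l ∈ t, ‖b m l‖ := by
        rw [sum_comm]; simp_rw [mul_sum]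

lemma sum_norm_ite_eq_le {ι : Type*} [DecidableEq ι] (s : Finset ι) (a : ι) :
    ∑ k ∈ s, ‖(if k = a then 1 else 0 : ℂ)‖ ≤ 1 := by
  simp_rw [apply_ite norm, norm_one, norm_zero]
  rw [sum_ite_eq']
  split_ifs <;> norm_num

lemma summable_sum_Icc_sub_add {f : ℕ → ℝ} (hf : Summable f) (d : ℕ) :
    Summable fun k => ∑ i ∈ Icc (k - d) (k + d), f i := by
  rw [← summable_nat_add_iff d]
  have hwindow : ∀ k,
      ∑ i ∈ Icc (k + d - d) (k + d + d), f i = ∑ t ∈ range (2 * d + 1), f (k + t) := by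
    intro k
    rw [← Ico_add_one_right_eq_Icc, sum_Ico_eq_sum_range, Nat.add_sub_cancel,
      show k + d + d + 1 - k = 2 * d + 1 by omega]
  simp_rw [hwindow]
  exact summable_sum fun t _ => (summable_nat_add_iff t).2 hf

lemma halfRho_zero_coeffs (p : ℕ) : halfRho 0 p = 1 := by simp [halfRho]

lemma halfRho_nonneg (α : ℕ → ℂ) (p : ℕ) : 0 ≤ halfRho α p := Real.sqrt_nonneg _

lemma halfRho_le_one (α : ℕ → ℂ) (p : ℕ) : halfRho α p ≤ 1 :=
  Real.sqrt_le_one.2 (by nlinarith [norm_nonneg (α p)])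

lemma one_sub_halfRho_le {α : ℕ → ℂ} {p : ℕ} (hα : ‖α p‖ ≤ 1) : 1 - halfRho α p ≤ ‖α p‖ := by
  have := norm_nonneg (α p)
  rw [sub_le_comm]
  exact Real.le_sqrt_of_sq_le (by nlinarith)

noncomputable def thetaBlock (α : ℕ → ℂ) (p j k : ℕ) : ℂ :=
  if j = p then (if k = p then conj (α p) else if k = p + 1 then (halfRho α p : ℂ) else 0)
  else if j = p + 1 then (if k = p then (halfRho α p : ℂ) else if k = p + 1 then -α p else 0)
  else 0

section thetaBlock

variable {α β : ℕ → ℂ} {p j k : ℕ}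

lemma thetaBlock_eq_zero (α : ℕ → ℂ) (hp : k ≠ p) (hp' : k ≠ p + 1) : thetaBlock α p j k = 0 := by
  simp [thetaBlock, hp, hp']

lemma thetaBlock_congr (h : k = p ∨ k = p + 1 → β p = α p) :
    thetaBlock β p j k = thetaBlock α p j k := by
  by_cases hk : k = p ∨ k = p + 1
  · simp only [thetaBlock, halfRho, h hk]
  · rw [not_or] at hk
    rw [thetaBlock_eq_zero β hk.1 hk.2, thetaBlock_eq_zero α hk.1 hk.2]

lemma norm_thetaBlock_le_one (hα : ‖α p‖ ≤ 1) : ‖thetaBlock α p j k‖ ≤ 1 := by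
  unfold thetaBlock
  split_ifs <;>
    simp only [norm_zero, zero_le_one, Complex.norm_conj, norm_neg, Complex.norm_real,
      Real.norm_of_nonneg (halfRho_nonneg α p), halfRho_le_one, hα]

lemma norm_thetaBlock_sub_zero_coeffs_le (hα : ‖α p‖ ≤ 1) :
    ‖thetaBlock α p j k - thetaBlock 0 p j k‖ ≤ ‖α p‖ := by
  have hρ : ‖(halfRho α p : ℂ) - 1‖ ≤ ‖α p‖ := by
    rw [← Complex.ofReal_one, ← Complex.ofReal_sub, Complex.norm_real, Real.norm_eq_abs,
      abs_sub_comm, abs_of_nonneg (sub_nonneg.2 (halfRho_le_one α p))]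
    exact one_sub_halfRho_le hα
  unfold thetaBlock
  split_ifs <;>
    simp [halfRho_zero_coeffs, hρ]

lemma sum_norm_thetaBlock_le (hα : ‖α p‖ ≤ 1) (s : Finset ℕ) :
    ∑ k ∈ s, ‖thetaBlock α p j k‖ ≤ 2 := by
  refine (sum_le_add_of_eq_zero_off_pair (fun _ => norm_nonneg _) (Nat.lt_add_one p).ne
    fun k hk hk' => ?_).trans ?_
  · rw [thetaBlock_eq_zero α hk hk', norm_zero]
  · linarith [norm_thetaBlock_le_one (j := j) (k := p) hα,
      norm_thetaBlock_le_one (j := j) (k := p + 1) hα]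

lemma sum_norm_thetaBlock_sub_zero_coeffs_le (hα : ‖α p‖ ≤ 1) (s : Finset ℕ) :
    ∑ k ∈ s, ‖thetaBlock α p j k - thetaBlock 0 p j k‖ ≤ 2 * ‖α p‖ := by
  refine (sum_le_add_of_eq_zero_off_pair (fun _ => norm_nonneg _) (Nat.lt_add_one p).ne
    fun k hk hk' => ?_).trans ?_
  · rw [thetaBlock_eq_zero α hk hk', thetaBlock_eq_zero 0 hk hk', sub_zero, norm_zero]
  · linarith [norm_thetaBlock_sub_zero_coeffs_le (j := j) (k := p) hα,
      norm_thetaBlock_sub_zero_coeffs_le (j := j) (k := p + 1) hα]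

end thetaBlock

lemma halfCmvL_eq_thetaBlock (α : ℕ → ℂ) (j k : ℕ) :
    halfCmvL α j k = thetaBlock α (2 * (j / 2)) j k := by
  unfold halfCmvL thetaBlock
  rcases Nat.even_or_odd' j with ⟨i, rfl | rfl⟩
  · simp [show 2 * i / 2 = i by omega]
  · have : ¬ Even (2 * i + 1) := by simp
    simp only [this, if_false, show (2 * i + 1) / 2 = i by omega,
      show 2 * i + 1 - 1 = 2 * i by omega]
    split_ifs <;> first | rfl | omega

lemma halfCmvM_eq_thetaBlock (α : ℕ → ℂ) {j : ℕ} (hj : j ≠ 0) (k : ℕ) :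
    halfCmvM α j k = thetaBlock α (2 * ((j - 1) / 2) + 1) j k := by
  unfold halfCmvM thetaBlock
  rcases Nat.even_or_odd' j with ⟨i, rfl | rfl⟩
  · obtain ⟨i, rfl⟩ := Nat.exists_eq_succ_of_ne_zero (by omega : i ≠ 0)
    have : ¬ Odd (2 * (i + 1)) := by simp
    simp only [hj, this, if_false, show 2 * (i + 1) - 1 = 2 * i + 1 by omega,
      show (2 * i + 1) / 2 = i by omega]
    split_ifs <;> first | rfl | omega
  · simp

section halfCmvLM

variable {α : ℕ → ℂ}

lemma halfCmvL_eq_zero (α : ℕ → ℂ) {j k : ℕ} (hk : k ≠ 2 * (j / 2)) (hk' : k ≠ 2 * (j / 2) + 1) :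
    halfCmvL α j k = 0 := by
  rw [halfCmvL_eq_thetaBlock, thetaBlock_eq_zero α hk hk']

lemma norm_halfCmvL_le_one (hα : ∀ i, ‖α i‖ ≤ 1) (j k : ℕ) : ‖halfCmvL α j k‖ ≤ 1 := by
  rw [halfCmvL_eq_thetaBlock]
  exact norm_thetaBlock_le_one (hα _)

lemma sum_norm_halfCmvL_le (hα : ∀ i, ‖α i‖ ≤ 1) (j : ℕ) (s : Finset ℕ) :
    ∑ k ∈ s, ‖halfCmvL α j k‖ ≤ 2 := by
  simp_rw [halfCmvL_eq_thetaBlock]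
  exact sum_norm_thetaBlock_le (hα _) s

lemma sum_norm_halfCmvL_sub_le (hα : ∀ i, ‖α i‖ ≤ 1) (j : ℕ) (s : Finset ℕ) :
    ∑ k ∈ s, ‖halfCmvL α j k - halfCmvL 0 j k‖ ≤ 2 * ‖α (2 * (j / 2))‖ := by
  simp_rw [halfCmvL_eq_thetaBlock]
  exact sum_norm_thetaBlock_sub_zero_coeffs_le (hα _) s

lemma sum_norm_halfCmvM_le (hα : ∀ i, ‖α i‖ ≤ 1) (j : ℕ) (s : Finset ℕ) :
    ∑ k ∈ s, ‖halfCmvM α j k‖ ≤ 2 := by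
  rcases eq_or_ne j 0 with rfl | hj
  · simpa [halfCmvM] using (sum_norm_ite_eq_le s 0).trans one_le_two
  · simp_rw [halfCmvM_eq_thetaBlock α hj]
    exact sum_norm_thetaBlock_le (hα _) s

lemma sum_norm_halfCmvM_sub_le (hα : ∀ i, ‖α i‖ ≤ 1) {j : ℕ} (hj : j ≠ 0) (s : Finset ℕ) :
    ∑ k ∈ s, ‖halfCmvM α j k - halfCmvM 0 j k‖ ≤ 2 * ‖α (2 * ((j - 1) / 2) + 1)‖ := by
  simp_rw [halfCmvM_eq_thetaBlock _ hj]
  exact sum_norm_thetaBlock_sub_zero_coeffs_le (hα _) s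

lemma halfCmvL_zero_coeffs (j k : ℕ) :
    halfCmvL 0 j k = if k = (if Even j then j + 1 else j - 1) then 1 else 0 := by
  unfold halfCmvL
  split_ifs <;> simp_all [halfRho_zero_coeffs, Nat.even_iff] <;> omega

lemma halfCmvM_zero_coeffs (j k : ℕ) :
    halfCmvM 0 j k =
      if k = (if j = 0 then 0 else if Odd j then j + 1 else j - 1) then 1 else 0 := by
  unfold halfCmvM
  split_ifs <;> simp_all [halfRho_zero_coeffs, Nat.odd_iff] <;> omega

lemma sum_norm_halfCmvM_zero_coeffs_le (j : ℕ) (s : Finset ℕ) :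
    ∑ k ∈ s, ‖halfCmvM 0 j k‖ ≤ 1 := by
  simp_rw [halfCmvM_zero_coeffs]
  exact sum_norm_ite_eq_le s _

end halfCmvLM

-- `1 - 2 = 0` in `ℕ` is the right value here: row `1` of `C₀` is the unit vector `e₀`.
def cmvShift (j : ℕ) : ℕ := if Even j then j + 2 else j - 2

lemma halfCmvC_zero_coeffs (j l : ℕ) : halfCmvC 0 j l = if l = cmvShift j then 1 else 0 := by
  have hτ : (if Even j then j + 1 else j - 1) ∈ Icc (j - 1) (j + 1) := by
    rw [mem_Icc]; split_ifs <;> omega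
  unfold halfCmvC
  simp_rw [halfCmvL_zero_coeffs, ite_mul, one_mul, zero_mul]
  rw [sum_ite_eq', if_pos hτ, halfCmvM_zero_coeffs]
  congr 2
  unfold cmvShift
  split_ifs <;> simp_all [Nat.odd_iff, Nat.even_iff] <;> omega

section halfCmvC

variable {α β : ℕ → ℂ}

lemma sum_norm_halfCmvC_le (hα : ∀ i, ‖α i‖ ≤ 1) (j : ℕ) (s : Finset ℕ) :
    ∑ l ∈ s, ‖halfCmvC α j l‖ ≤ 4 := by
  unfold halfCmvC
  calc ∑ l ∈ s, ‖∑ m ∈ Icc (j - 1) (j + 1), halfCmvL α j m * halfCmvM α m l‖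
      ≤ ∑ m ∈ Icc (j - 1) (j + 1), ‖halfCmvL α j m‖ * ∑ l ∈ s, ‖halfCmvM α m l‖ :=
        sum_norm_sum_mul_le _ _ _ _
    _ ≤ (∑ m ∈ Icc (j - 1) (j + 1), ‖halfCmvL α j m‖) * 2 := by
        rw [sum_mul]
        exact sum_le_sum fun m _ =>
          mul_le_mul_of_nonneg_left (sum_norm_halfCmvM_le hα m s) (norm_nonneg _)
    _ ≤ 2 * 2 := by gcongr; exact sum_norm_halfCmvL_le hα j _
    _ = 4 := by norm_num

lemma sum_norm_halfCmvC_sub_le_rows (hα : ∀ i, ‖α i‖ ≤ 1) (j : ℕ) (s : Finset ℕ) :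
    ∑ l ∈ s, ‖halfCmvC α j l - halfCmvC 0 j l‖ ≤
      ∑ l ∈ s, ‖halfCmvM α (2 * (j / 2)) l - halfCmvM 0 (2 * (j / 2)) l‖ +
      ∑ l ∈ s, ‖halfCmvM α (2 * (j / 2) + 1) l - halfCmvM 0 (2 * (j / 2) + 1) l‖ +
      2 * ‖α (2 * (j / 2))‖ := by
  set p := 2 * (j / 2)
  set rowΔM : ℕ → ℝ := fun m => ∑ l ∈ s, ‖halfCmvM α m l - halfCmvM 0 m l‖
  have hsplit : ∀ l, halfCmvC α j l - halfCmvC 0 j l =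
      ∑ m ∈ Icc (j - 1) (j + 1), halfCmvL α j m * (halfCmvM α m l - halfCmvM 0 m l) +
      ∑ m ∈ Icc (j - 1) (j + 1), (halfCmvL α j m - halfCmvL 0 j m) * halfCmvM 0 m l := by
    intro l
    simp only [halfCmvC, ← sum_add_distrib, ← sum_sub_distrib]
    exact sum_congr rfl fun m _ => by ring
  have hLΔM : ∑ m ∈ Icc (j - 1) (j + 1), ‖halfCmvL α j m‖ * rowΔM m ≤
      rowΔM p + rowΔM (p + 1) := by
    have hrow : ∀ m, 0 ≤ rowΔM m := fun m => sum_nonneg fun _ _ => norm_nonneg _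
    refine (sum_le_add_of_eq_zero_off_pair (fun m => mul_nonneg (norm_nonneg _) (hrow m))
      (Nat.lt_add_one p).ne fun m hm hm' => ?_).trans ?_
    · rw [halfCmvL_eq_zero α hm hm', norm_zero, zero_mul]
    · exact add_le_add (mul_le_of_le_one_left (hrow _) (norm_halfCmvL_le_one hα _ _))
        (mul_le_of_le_one_left (hrow _) (norm_halfCmvL_le_one hα _ _))
  have hΔLM : ∑ m ∈ Icc (j - 1) (j + 1),
      ‖halfCmvL α j m - halfCmvL 0 j m‖ * ∑ l ∈ s, ‖halfCmvM 0 m l‖ ≤ 2 * ‖α p‖ :=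
    (sum_le_sum fun m _ => mul_le_of_le_one_right (norm_nonneg _)
      (sum_norm_halfCmvM_zero_coeffs_le m s)).trans (sum_norm_halfCmvL_sub_le hα j _)
  calc ∑ l ∈ s, ‖halfCmvC α j l - halfCmvC 0 j l‖
      ≤ ∑ l ∈ s, ‖∑ m ∈ Icc (j - 1) (j + 1),
            halfCmvL α j m * (halfCmvM α m l - halfCmvM 0 m l)‖ +
        ∑ l ∈ s, ‖∑ m ∈ Icc (j - 1) (j + 1),
            (halfCmvL α j m - halfCmvL 0 j m) * halfCmvM 0 m l‖ := by
        rw [← sum_add_distrib]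
        exact sum_le_sum fun l _ => (hsplit l).symm ▸ norm_add_le _ _
    _ ≤ rowΔM p + rowΔM (p + 1) + 2 * ‖α p‖ :=
        add_le_add ((sum_norm_sum_mul_le _ _ _ _).trans hLΔM)
          ((sum_norm_sum_mul_le _ _ _ _).trans hΔLM)

lemma sum_norm_halfCmvC_sub_le (hα : ∀ i, ‖α i‖ ≤ 1) (j : ℕ) (s : Finset ℕ) :
    ∑ l ∈ s, ‖halfCmvC α j l - halfCmvC 0 j l‖ ≤ 2 * ∑ i ∈ Icc (j - 2) (j + 1), ‖α i‖ := by
  refine (sum_norm_halfCmvC_sub_le_rows hα j s).trans ?_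
  set p := 2 * (j / 2)
  have hsucc := sum_norm_halfCmvM_sub_le hα (j := p + 1) (by omega) s
  rw [show 2 * ((p + 1 - 1) / 2) + 1 = p + 1 by omega] at hsucc
  rcases Nat.eq_zero_or_pos p with hp0 | hp0
  · have hrow_zero : ∑ l ∈ s, ‖halfCmvM α p l - halfCmvM 0 p l‖ = 0 := by
      simp [hp0, halfCmvM]
    have := sum_le_sum_of_subset_of_nonneg (f := fun i => ‖α i‖) (s := {p, p + 1})
      (t := Icc (j - 2) (j + 1))
      (by intro i; simp only [mem_insert, mem_singleton, mem_Icc]; omega)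
      (fun _ _ _ => norm_nonneg _)
    rw [sum_pair (by omega)] at this
    linarith
  · have hpred := sum_norm_halfCmvM_sub_le hα (j := p) (by omega) s
    rw [show 2 * ((p - 1) / 2) + 1 = p - 1 by omega] at hpred
    have := sum_le_sum_of_subset_of_nonneg (f := fun i => ‖α i‖) (s := {p - 1, p, p + 1})
      (t := Icc (j - 2) (j + 1))
      (by intro i; simp only [mem_insert, mem_singleton, mem_Icc]; omega)
      (fun _ _ _ => norm_nonneg _)
    rw [sum_insert (by simp only [mem_insert, mem_singleton]; omega), sum_pair (by omega)] at this
    linarith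

lemma halfCmvC_congr {j l : ℕ} (h : ∀ m ∈ Icc (min j l - 1) (max j l + 1), β m = α m) :
    halfCmvC β j l = halfCmvC α j l := by
  unfold halfCmvC
  refine sum_congr rfl fun m hm => ?_
  rw [mem_Icc] at hm
  rw [halfCmvL_eq_thetaBlock, halfCmvL_eq_thetaBlock,
    thetaBlock_congr fun _ => h _ (by rw [mem_Icc]; omega)]
  rcases eq_or_ne m 0 with rfl | hm0
  · rfl
  · rw [halfCmvM_eq_thetaBlock β hm0, halfCmvM_eq_thetaBlock α hm0,
      thetaBlock_congr fun hl => h _ (by rw [mem_Icc]; omega)]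

end halfCmvC

def cmvShiftCoord (j : ℕ) : ℤ := if Even j then (j / 2 : ℕ) else -((j / 2 : ℕ) : ℤ) - 1

lemma cmvShiftCoord_cmvShift (j : ℕ) : cmvShiftCoord (cmvShift j) = cmvShiftCoord j + 1 := by
  unfold cmvShiftCoord cmvShift
  split_ifs <;> simp_all [Nat.even_iff] <;> omega

lemma cmvShiftCoord_iterate (n j : ℕ) : cmvShiftCoord (cmvShift^[n] j) = cmvShiftCoord j + n := by
  induction n with
  | zero => simp
  | succ n ih => rw [Function.iterate_succ_apply', cmvShiftCoord_cmvShift, ih]; push_cast; ring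

lemma cmvShift_iterate_ne {n : ℕ} (hn : n ≠ 0) (j : ℕ) : cmvShift^[n] j ≠ j := fun h => by
  have := cmvShiftCoord_iterate n j
  rw [h] at this
  omega

lemma halfCmvCpow_zero_coeffs (n j k : ℕ) :
    halfCmvCpow 0 n j k = if k = cmvShift^[n] j then 1 else 0 := by
  induction n generalizing j with
  | zero => by_cases hjk : j = k <;> simp [halfCmvCpow, hjk, Ne.symm]
  | succ n ih =>
    have hσ : cmvShift j ∈ Icc (j - 2) (j + 2) := by
      rw [mem_Icc]; unfold cmvShift; split_ifs <;> omega
    simp only [halfCmvCpow, halfCmvC_zero_coeffs, ih, ite_mul, one_mul, zero_mul]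
    rw [sum_ite_eq', if_pos hσ, Function.iterate_succ_apply]

lemma halfCmvCpow_zero_coeffs_self {n : ℕ} (hn : n ≠ 0) (k : ℕ) : halfCmvCpow 0 n k k = 0 := by
  rw [halfCmvCpow_zero_coeffs, if_neg (cmvShift_iterate_ne hn k).symm]

section halfCmvCpow

variable {α β : ℕ → ℂ}

lemma norm_halfCmvCpow_le (hα : ∀ i, ‖α i‖ ≤ 1) (n j k : ℕ) : ‖halfCmvCpow α n j k‖ ≤ 4 ^ n := by
  induction n generalizing j with
  | zero => simp only [halfCmvCpow]; split_ifs <;> simp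
  | succ n ih =>
    calc ‖∑ l ∈ Icc (j - 2) (j + 2), halfCmvC α j l * halfCmvCpow α n l k‖
        ≤ ∑ l ∈ Icc (j - 2) (j + 2), ‖halfCmvC α j l‖ * 4 ^ n :=
          (norm_sum_le _ _).trans (sum_le_sum fun l _ => by rw [norm_mul]; gcongr; exact ih l)
      _ = (∑ l ∈ Icc (j - 2) (j + 2), ‖halfCmvC α j l‖) * 4 ^ n := (sum_mul _ _ _).symm
      _ ≤ 4 * 4 ^ n := by gcongr; exact sum_norm_halfCmvC_le hα j _
      _ = 4 ^ (n + 1) := by ring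

lemma norm_halfCmvCpow_sub_zero_coeffs_le (hα : ∀ i, ‖α i‖ ≤ 1) (hsum : Summable fun i => ‖α i‖)
    (n j k : ℕ) :
    ‖halfCmvCpow α n j k - halfCmvCpow 0 n j k‖ ≤ 4 ^ n * ∑' i, ‖α i‖ := by
  set S := ∑' i, ‖α i‖
  have hS : 0 ≤ S := tsum_nonneg fun _ => norm_nonneg _
  induction n generalizing j with
  | zero => simpa [halfCmvCpow] using hS
  | succ n ih =>
    have hrow : ∑ l ∈ Icc (j - 2) (j + 2), ‖halfCmvC α j l - halfCmvC 0 j l‖ ≤ 2 * S :=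
      (sum_norm_halfCmvC_sub_le hα j _).trans
        (by gcongr; exact hsum.sum_le_tsum _ fun _ _ => norm_nonneg _)
    have hrow_free : ∑ l ∈ Icc (j - 2) (j + 2), ‖halfCmvC 0 j l‖ ≤ 1 := by
      simp_rw [halfCmvC_zero_coeffs]; exact sum_norm_ite_eq_le _ _
    calc ‖halfCmvCpow α (n + 1) j k - halfCmvCpow 0 (n + 1) j k‖
        = ‖∑ l ∈ Icc (j - 2) (j + 2), ((halfCmvC α j l - halfCmvC 0 j l) * halfCmvCpow α n l k +
            halfCmvC 0 j l * (halfCmvCpow α n l k - halfCmvCpow 0 n l k))‖ := by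
          simp only [halfCmvCpow, ← sum_sub_distrib]
          congr 1; exact sum_congr rfl fun l _ => by ring
      _ ≤ ∑ l ∈ Icc (j - 2) (j + 2),
            (‖halfCmvC α j l - halfCmvC 0 j l‖ * 4 ^ n + ‖halfCmvC 0 j l‖ * (4 ^ n * S)) := by
          refine (norm_sum_le _ _).trans (sum_le_sum fun l _ => (norm_add_le _ _).trans ?_)
          rw [norm_mul, norm_mul]
          gcongr
          exacts [norm_halfCmvCpow_le hα n l k, ih l]
      _ ≤ 2 * S * 4 ^ n + 1 * (4 ^ n * S) := by
          rw [sum_add_distrib, ← sum_mul, ← sum_mul]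
          gcongr
      _ ≤ 4 ^ (n + 1) * S := by
          have : 0 ≤ 4 ^ n * S := by positivity
          rw [pow_succ]; linarith

lemma halfCmvCpow_congr {n j k : ℕ}
    (h : ∀ m ∈ Icc (min j k - (2 * n - 1)) (max j k + (2 * n - 1)), β m = α m) :
    halfCmvCpow β n j k = halfCmvCpow α n j k := by
  induction n generalizing j with
  | zero => rfl
  | succ n ih =>
    simp only [halfCmvCpow]
    refine sum_congr rfl fun l hl => ?_
    rw [mem_Icc] at hl
    rcases Nat.eq_zero_or_pos n with rfl | hn0
    · simp only [halfCmvCpow]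
      split_ifs with hlk
      · subst hlk
        rw [halfCmvC_congr fun m hm => h m (by rw [mem_Icc] at hm ⊢; omega)]
      · simp
    · rw [halfCmvC_congr fun m hm => h m (by rw [mem_Icc] at hm ⊢; omega),
        ih fun m hm => h m (by rw [mem_Icc] at hm ⊢; omega)]

lemma norm_halfCmvCpow_diag_le (hα : ∀ i, ‖α i‖ ≤ 1) {n : ℕ} (hn : 1 ≤ n) (k : ℕ) :
    ‖halfCmvCpow α n k k‖ ≤ 4 ^ n * ∑ m ∈ Icc (k - (2 * n - 1)) (k + (2 * n - 1)), ‖α m‖ := by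
  set w := Icc (k - (2 * n - 1)) (k + (2 * n - 1))
  set α' := (w : Set ℕ).indicator α
  have hagree : halfCmvCpow α' n k k = halfCmvCpow α n k k :=
    halfCmvCpow_congr fun m hm => Set.indicator_of_mem (by simpa [w] using hm) α
  have hzero : ∀ i ∉ w, ‖α' i‖ = 0 := fun i hi => by
    rw [norm_eq_zero]; exact Set.indicator_of_notMem (by simpa using hi) α
  have htsum : ∑' i, ‖α' i‖ = ∑ m ∈ w, ‖α m‖ := by
    rw [tsum_eq_sum hzero]
    exact sum_congr rfl fun i hi => by simp only [α', Set.indicator_of_mem (Finset.mem_coe.2 hi) α]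
  calc ‖halfCmvCpow α n k k‖ = ‖halfCmvCpow α' n k k - halfCmvCpow 0 n k k‖ := by
        rw [hagree, halfCmvCpow_zero_coeffs_self (by omega), sub_zero]
    _ ≤ 4 ^ n * ∑' i, ‖α' i‖ :=
        norm_halfCmvCpow_sub_zero_coeffs_le
          (fun i => (norm_indicator_le_norm_self α i).trans (hα i))
          (summable_of_ne_finset_zero hzero) n k k
    _ = 4 ^ n * ∑ m ∈ w, ‖α m‖ := by rw [htsum]

end halfCmvCpow

/-- Let `(α_j)_{j≥0}` be a sequence in the open unit disk
with `Σ_j |α_j| < ∞`, and `C` the associated half-infinite CMV matrix. Then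
for every `n ≥ 1` the series `Σ_{k≥0} (C^n)_{kk}` converges absolutely; each
diagonal entry `(C^n)_{kk}` depends only on `α_{k-(2n-1)}, …, α_{k+2n-1}`
(negative indices discarded); and
`|(C^n)_{kk}| ≤ 4^n (|α_{k-(2n-1)}| + ⋯ + |α_{k+2n-1}|)` for `k ≥ 4n`. -/
theorem halfCmv_diagonal_summable (α : ℕ → ℂ)
    (hα : ∀ j, ‖α j‖ < 1)
    (hl1 : Summable fun j => ‖α j‖) (n : ℕ) (hn : 1 ≤ n) :
    Summable (fun k => ‖halfCmvCpow α n k k‖) ∧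
    (∀ (k : ℕ) (β : ℕ → ℂ),
      (∀ m, k - (2 * n - 1) ≤ m → m ≤ k + (2 * n - 1) → β m = α m) →
      halfCmvCpow β n k k = halfCmvCpow α n k k) ∧
    (∀ k : ℕ, 4 * n ≤ k →
      ‖halfCmvCpow α n k k‖
        ≤ 4 ^ n * ∑ m ∈ Finset.Icc (k - (2 * n - 1)) (k + (2 * n - 1)),
            ‖α m‖) := by
  have hα_le : ∀ j, ‖α j‖ ≤ 1 := fun j => (hα j).le
  refine ⟨?_, fun k β hβ => ?_, fun k _ => norm_halfCmvCpow_diag_le hα_le hn k⟩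
  · exact Summable.of_nonneg_of_le (fun _ => norm_nonneg _) (norm_halfCmvCpow_diag_le hα_le hn)
      ((summable_sum_Icc_sub_add hl1 _).mul_left _)
  · refine halfCmvCpow_congr fun m hm => ?_
    rw [mem_Icc, min_self, max_self] at hm
    exact hβ m hm.1 hm.2
end
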